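/- For the function v(x) = log(8λ²) - 2·log(λ² + (x¹+s₀)² + (x²+a+λ/√2)²), the total mass identity ∫_{ℝ²_a} e^{v} dx + ∫_{∂ℝ²_a} e^{v/2} ds = 4π holds, where ℝ²_a = {x² > -a}. -/

import Mathlib

open MeasureTheory Real Set Filter Topology

/-!
Put `c = λ / √2`, so that `√(8λ²) = 4c`. Then `e^v = 8λ² / (λ² + (x¹ + s₀)² + (x² + a + c)²)²`,
and on the boundary line `e^{v/2} = 4c / (λ² + c² + (x¹ + s₀)²)`, whose integral is
`4πc / √(λ² + c²)`. In the bulk, integrating first over the whole line in `x¹` gives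
`π / (2 D^{3/2})` with `D = λ² + (x² + a + c)²`, and the remaining integral over `x² > -a` has
the elementary antiderivative `t / (λ² √(λ² + t²))`, so the bulk term is
`4π (1 - c / √(λ² + c²))`. The two contributions add up to `4π`.
-/

lemma integrable_inv_one_add_sq_sq : Integrable fun x : ℝ => ((1 + x ^ 2) ^ 2)⁻¹ := by
  refine (integrable_rpow_neg_one_add_norm_sq (E := ℝ) (μ := volume) (r := 4)
    (by norm_num)).congr (ae_of_all _ fun x => ?_)
  norm_num [Real.norm_eq_abs, sq_abs, rpow_neg (by positivity : (0:ℝ) ≤ 1 + x ^ 2)]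

lemma tendsto_div_one_add_sq_cocompact :
    Tendsto (fun x : ℝ => x / (1 + x ^ 2)) (cocompact ℝ) (𝓝 0) := by
  refine squeeze_zero_norm (fun x => ?_) tendsto_norm_cocompact_atTop.inv_tendsto_atTop
  rcases eq_or_ne x 0 with rfl | hx
  · simp
  have hx' : 0 < |x| := abs_pos.2 hx
  rw [Pi.inv_apply, norm_div, Real.norm_eq_abs, Real.norm_eq_abs,
    abs_of_pos (by positivity : (0:ℝ) < 1 + x ^ 2), div_le_iff₀ (by positivity), ← sq_abs,
    inv_mul_eq_div, le_div_iff₀ hx']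
  nlinarith

lemma integral_inv_one_add_sq_sq : ∫ x : ℝ, ((1 + x ^ 2) ^ 2)⁻¹ = π / 2 := by
  have hderiv (x : ℝ) :
      HasDerivAt (fun x => (x / (1 + x ^ 2) + arctan x) / 2) ((1 + x ^ 2) ^ 2)⁻¹ x := by
    have h : HasDerivAt (fun x : ℝ => 1 + x ^ 2) (2 * x) x := by
      simpa using ((hasDerivAt_id x).pow 2).const_add 1
    refine ((((hasDerivAt_id' x).div h (by positivity)).add
      (hasDerivAt_arctan x)).div_const 2).congr_deriv ?_
    field_simp
    ring
  have hlim {l : Filter ℝ} (hl : l ≤ cocompact ℝ) {θ : ℝ} (hθ : Tendsto arctan l (𝓝 θ)) :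
      Tendsto (fun x => (x / (1 + x ^ 2) + arctan x) / 2) l (𝓝 (θ / 2)) := by
    simpa using ((tendsto_div_one_add_sq_cocompact.mono_left hl).add hθ).div_const 2
  rw [integral_of_hasDerivAt_of_tendsto hderiv
    integrable_inv_one_add_sq_sq
    (hlim atBot_le_cocompact (tendsto_nhds_of_tendsto_nhdsWithin tendsto_arctan_atBot))
    (hlim atTop_le_cocompact (tendsto_nhds_of_tendsto_nhdsWithin tendsto_arctan_atTop))]
  ring

lemma add_sq_sqrt_mul {d : ℝ} (hd : 0 ≤ d) (x : ℝ) : d + (√d * x) ^ 2 = d * (1 + x ^ 2) := by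
  rw [mul_pow, sq_sqrt hd, mul_one_add]

lemma integral_eq_sqrt_mul_integral_comp_sqrt_mul {E : Type*} [NormedAddCommGroup E]
    [NormedSpace ℝ E] (g : ℝ → E) {d : ℝ} (hd : 0 < d) :
    ∫ x, g x = √d • ∫ x, g (√d * x) := by
  have hs : 0 < √d := sqrt_pos.2 hd
  rw [Measure.integral_comp_mul_left, abs_inv, abs_of_pos hs, smul_inv_smul₀ hs.ne']

lemma integrable_inv_add_sq {d : ℝ} (hd : 0 < d) : Integrable fun x : ℝ => (d + x ^ 2)⁻¹ := by
  rw [← integrable_comp_mul_left_iff _ (sqrt_pos.2 hd).ne']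
  simpa only [add_sq_sqrt_mul hd.le, mul_inv] using integrable_inv_one_add_sq.const_mul d⁻¹

lemma integral_inv_add_sq {d : ℝ} (hd : 0 < d) : ∫ x : ℝ, (d + x ^ 2)⁻¹ = π / √d := by
  rw [integral_eq_sqrt_mul_integral_comp_sqrt_mul _ hd]
  simp_rw [add_sq_sqrt_mul hd.le, mul_inv]
  rw [integral_const_mul, integral_univ_inv_one_add_sq, smul_eq_mul]
  have hs : 0 < √d := sqrt_pos.2 hd
  field_simp
  rw [sq_sqrt hd.le]

lemma integral_inv_add_sq_sq {d : ℝ} (hd : 0 < d) :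
    ∫ x : ℝ, ((d + x ^ 2) ^ 2)⁻¹ = π / (2 * d * √d) := by
  rw [integral_eq_sqrt_mul_integral_comp_sqrt_mul _ hd]
  simp_rw [add_sq_sqrt_mul hd.le, mul_pow, mul_inv]
  rw [integral_const_mul, integral_inv_one_add_sq_sq, smul_eq_mul]
  have hs : 0 < √d := sqrt_pos.2 hd
  field_simp
  rw [sq_sqrt hd.le]

lemma hasDerivAt_div_sqrt_add_sq {d : ℝ} (hd : 0 < d) (y : ℝ) :
    HasDerivAt (fun y => y / √(d + y ^ 2)) (d / ((d + y ^ 2) * √(d + y ^ 2))) y := by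
  have hpos : 0 < d + y ^ 2 := by positivity
  have hs : 0 < √(d + y ^ 2) := sqrt_pos.2 hpos
  have hq : HasDerivAt (fun y : ℝ => d + y ^ 2) (2 * y) y := by
    simpa using ((hasDerivAt_id y).pow 2).const_add d
  refine ((hasDerivAt_id' y).div (hq.sqrt hpos.ne') hs.ne').congr_deriv ?_
  field_simp
  rw [sq_sqrt hpos.le]
  ring

lemma tendsto_div_sqrt_add_sq_atTop (d : ℝ) :
    Tendsto (fun y => y / √(d + y ^ 2)) atTop (𝓝 1) := by
  have hq : Tendsto (fun y : ℝ => d + y ^ 2) atTop atTop :=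
    tendsto_atTop_add_const_left _ d (tendsto_pow_atTop two_ne_zero)
  have h : Tendsto (fun y => √(1 - d / (d + y ^ 2))) atTop (𝓝 1) := by
    simpa using ((tendsto_const_nhds.div_atTop hq).const_sub 1).sqrt
  refine h.congr' ?_
  filter_upwards [hq.eventually_gt_atTop 0, eventually_ge_atTop 0] with y hpos hy
  rw [one_sub_div hpos.ne', add_sub_cancel_left, sqrt_div' _ hpos.le, sqrt_sq hy]

lemma integral_Ioi_div_add_sq_mul_sqrt {d : ℝ} (hd : 0 < d) (b : ℝ) :
    ∫ y in Ioi b, d / ((d + y ^ 2) * √(d + y ^ 2)) = 1 - b / √(d + b ^ 2) :=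
  integral_Ioi_of_hasDerivAt_of_nonneg' (fun y _ => hasDerivAt_div_sqrt_add_sq hd y)
    (fun y _ => by positivity) (tendsto_div_sqrt_add_sq_atTop d)

lemma setIntegral_Ioi_comp_add_right {E : Type*} [NormedAddCommGroup E] [NormedSpace ℝ E]
    (f : ℝ → E) (b k : ℝ) : ∫ y in Ioi b, f (y + k) = ∫ y in Ioi (b + k), f y := by
  have := (measurePreserving_add_right (volume : Measure ℝ) k).setIntegral_preimage_emb
    (measurableEmbedding_addRight k) f (Ioi (b + k))
  simpa using this

lemma setIntegral_lt_snd_eq_integral_Ioi_integral {E : Type*} [NormedAddCommGroup E]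
    [NormedSpace ℝ E] {f : ℝ × ℝ → E} {b : ℝ} (hf : IntegrableOn f {p | b < p.2}) :
    ∫ p in {p : ℝ × ℝ | b < p.2}, f p = ∫ y in Ioi b, ∫ x, f (x, y) := by
  have hset : {p : ℝ × ℝ | b < p.2} = univ ×ˢ Ioi b := by ext; simp
  have hμ : (volume : Measure (ℝ × ℝ)).restrict (univ ×ˢ Ioi b) =
      (volume : Measure ℝ).prod (volume.restrict (Ioi b)) := by
    rw [Measure.volume_eq_prod, ← Measure.prod_restrict, Measure.restrict_univ]
  rw [IntegrableOn, hset, hμ] at hf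
  rw [hset, hμ, integral_prod_symm f hf]

lemma inv_sq_add_add_le_inv_mul_inv {m X Y : ℝ} (hm : 0 < m) (hX : 0 ≤ X) (hY : 0 ≤ Y) :
    ((m + X + Y) ^ 2)⁻¹ ≤ (m + X)⁻¹ * (m + Y)⁻¹ := by
  rw [← mul_inv]
  exact inv_anti₀ (by positivity) (by nlinarith [mul_nonneg hX hY])

lemma integrable_inv_sq_add_sq_add_sq {m : ℝ} (hm : 0 < m) (s k : ℝ) :
    Integrable fun p : ℝ × ℝ => ((m + (p.1 + s) ^ 2 + (p.2 + k) ^ 2) ^ 2)⁻¹ := by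
  rw [Measure.volume_eq_prod]
  refine (((integrable_inv_add_sq hm).comp_add_right s).mul_prod
    ((integrable_inv_add_sq hm).comp_add_right k)).mono' ?_ (ae_of_all _ fun p => ?_)
  · exact (Continuous.inv₀ (by fun_prop) fun p => by positivity).aestronglyMeasurable
  · rw [norm_of_nonneg (by positivity)]
    exact inv_sq_add_add_le_inv_mul_inv hm (sq_nonneg _) (sq_nonneg _)

lemma integral_inv_sq_add_sq_add_sq {m : ℝ} (hm : 0 < m) (s y : ℝ) :
    ∫ x, ((m + (x + s) ^ 2 + y ^ 2) ^ 2)⁻¹ =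
      π / (2 * m) * (m / ((m + y ^ 2) * √(m + y ^ 2))) := by
  have hD : 0 < m + y ^ 2 := by positivity
  calc ∫ x, ((m + (x + s) ^ 2 + y ^ 2) ^ 2)⁻¹ = ∫ x, ((m + y ^ 2 + (x + s) ^ 2) ^ 2)⁻¹ := by
        simp only [add_right_comm m]
    _ = π / (2 * (m + y ^ 2) * √(m + y ^ 2)) := by
        rw [integral_add_right_eq_self (fun x => ((m + y ^ 2 + x ^ 2) ^ 2)⁻¹) s,
          integral_inv_add_sq_sq hD]
    _ = π / (2 * m) * (m / ((m + y ^ 2) * √(m + y ^ 2))) := by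
        field_simp

lemma setIntegral_lt_snd_inv_sq_add_sq_add_sq {m : ℝ} (hm : 0 < m) (s k b : ℝ) :
    ∫ p in {p : ℝ × ℝ | b < p.2}, ((m + (p.1 + s) ^ 2 + (p.2 + k) ^ 2) ^ 2)⁻¹ =
      π / (2 * m) * (1 - (b + k) / √(m + (b + k) ^ 2)) := by
  rw [setIntegral_lt_snd_eq_integral_Ioi_integral
    (integrable_inv_sq_add_sq_add_sq hm s k).integrableOn]
  simp_rw [integral_inv_sq_add_sq_add_sq hm]
  rw [integral_const_mul,
    setIntegral_Ioi_comp_add_right (fun u => m / ((m + u ^ 2) * √(m + u ^ 2))),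
    integral_Ioi_div_add_sq_mul_sqrt hm]

lemma exp_log_sub_two_mul_log {A B : ℝ} (hA : 0 < A) (hB : 0 < B) :
    exp (log A - 2 * log B) = A * (B ^ 2)⁻¹ := by
  rw [exp_sub, exp_log hA, two_mul, exp_add, exp_log hB, sq, div_eq_mul_inv]

lemma exp_half_log_sub_two_mul_log {A B : ℝ} (hA : 0 < A) (hB : 0 < B) :
    exp ((log A - 2 * log B) / 2) = √A * B⁻¹ := by
  rw [show (log A - 2 * log B) / 2 = log √A - log B by rw [log_sqrt hA.le]; ring, exp_sub,
    exp_log (sqrt_pos.2 hA), exp_log hB, div_eq_mul_inv]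

theorem stmt_2_general (lam s₀ a : ℝ) (hlam : 0 < lam)
    (v : ℝ → ℝ → ℝ)
    (hv : ∀ x1 x2 : ℝ, v x1 x2 =
      Real.log (8 * lam ^ 2) -
        2 * Real.log (lam ^ 2 + (x1 + s₀) ^ 2 + (x2 + a + lam / Real.sqrt 2) ^ 2)) :
    (∫ p in {p : ℝ × ℝ | -a < p.2}, Real.exp (v p.1 p.2)) +
      (∫ x1 : ℝ, Real.exp (v x1 (-a) / 2)) = 4 * Real.pi := by
  set c := lam / √2 with hc_def
  have hm : 0 < lam ^ 2 := by positivity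
  have h8 : √(8 * lam ^ 2) = 4 * c := by
    rw [show 8 * lam ^ 2 = (4 * c) ^ 2 by
      rw [hc_def, mul_pow, div_pow, sq_sqrt zero_le_two]; ring]
    exact sqrt_sq (by positivity)
  have hbulk : ∫ p in {p : ℝ × ℝ | -a < p.2}, exp (v p.1 p.2) =
      8 * lam ^ 2 * (π / (2 * lam ^ 2) * (1 - c / √(lam ^ 2 + c ^ 2))) := by
    rw [← neg_add_cancel_left a c, ← setIntegral_lt_snd_inv_sq_add_sq_add_sq hm s₀ (a + c),
      ← integral_const_mul]
    congr 1 with p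
    rw [hv, exp_log_sub_two_mul_log (by positivity) (by positivity), add_assoc p.2]
  have hbdry : ∫ x1, exp (v x1 (-a) / 2) = 4 * c * (π / √(lam ^ 2 + c ^ 2)) := by
    calc ∫ x1, exp (v x1 (-a) / 2) = ∫ x1, 4 * c * (lam ^ 2 + c ^ 2 + (x1 + s₀) ^ 2)⁻¹ := by
          congr 1 with x
          rw [hv, neg_add_cancel, zero_add, exp_half_log_sub_two_mul_log (by positivity)
            (by positivity), h8, add_right_comm]
      _ = 4 * c * (π / √(lam ^ 2 + c ^ 2)) := by
          rw [integral_const_mul,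
            integral_add_right_eq_self (fun x => (lam ^ 2 + c ^ 2 + x ^ 2)⁻¹),
            integral_inv_add_sq (by positivity)]
  rw [hbulk, hbdry]
  field_simp
  ring

/-- Total mass identity for the bubble: `∫_{ℝ²_a} e^v dx + ∫_{∂ℝ²_a} e^{v/2} ds = 4π`. -/
theorem stmt_2 (lam s₀ a : ℝ) (hlam : 0 < lam) (ha : 0 ≤ a)
    (v : ℝ → ℝ → ℝ)
    (hv : ∀ x1 x2 : ℝ, v x1 x2 =
      Real.log (8 * lam ^ 2) -
        2 * Real.log (lam ^ 2 + (x1 + s₀) ^ 2 + (x2 + a + lam / Real.sqrt 2) ^ 2)) :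
    (∫ p in {p : ℝ × ℝ | -a < p.2}, Real.exp (v p.1 p.2)) +
      (∫ x1 : ℝ, Real.exp (v x1 (-a) / 2)) = 4 * Real.pi :=
  stmt_2_general lam s₀ a hlam v hv
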